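/- For even n = 2k with k ≥ 1, the ABR value of the all-ones string of length n equals (2 · 4^k - 5)/3. -/

import Mathlib

/-- The ABR base sequence: B 0 = 2, B 1 = 3, and for i ≥ 2,
    B i = 2^(i+1) - 1 - ∑_{j odd, j < i} B j. -/
def abrB : ℕ → ℕ
  | 0 => 2
  | 1 => 3
  | n + 2 =>
      2 ^ (n + 3) - 1 -
        ∑ j ∈ ((Finset.range (n + 2)).filter fun j => j % 2 = 1).attach, abrB j.1
  decreasing_by
    exact Finset.mem_range.mp (Finset.mem_filter.mp j.2).1

/-- Extend a length-`n` bit string to all of ℕ by zeros. -/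
def extBits (n : ℕ) (d : Fin n → Bool) : ℕ → Bool :=
  fun i => if h : i < n then d ⟨i, h⟩ else false

/-- The sign exponent ε: 1 iff i is even, i ≤ n - 2, d i = 1 and d (i+1) = 1. -/
def abrEps (n : ℕ) (d : ℕ → Bool) (i : ℕ) : ℕ :=
  if i % 2 = 0 ∧ i + 2 ≤ n ∧ d i = true ∧ d (i + 1) = true then 1 else 0

/-- ABR value of an n-bit string: ∑_{i<n} (-1)^{ε(i)} dᵢ Bᵢ. -/
def abrVal (n : ℕ) (d : ℕ → Bool) : ℤ :=
  ∑ i ∈ Finset.range n, (-1) ^ abrEps n d i * (cond (d i) 1 0 : ℤ) * (abrB i : ℤ)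

/-!
If `B₁ + B₃ + ⋯ + B_{2k+1} = 4^(k+1) - 1`, the recursion gives `B_{2k+2} = 4^(k+1)` and
`B_{2k+3} = 3 · 4^(k+1)`, which extends the odd sum to `4^(k+2) - 1`; so `B_{2k} = 4^k` and
`B_{2k+1} = 3 · 4^k` for `k ≥ 1`. In the all-ones string every even position carries a minus
sign, so its value is `∑_{i<k} (B_{2i+1} - B_{2i})`, the geometric sum `2 (1 + 4 + ⋯ + 4^(k-1))`
corrected by `-1` for the exceptional `B₀ = 2`.
-/

open Finset

lemma abrB_add_two (n : ℕ) :
    abrB (n + 2) = 2 ^ (n + 3) - 1 - ∑ j ∈ (range (n + 2)).filter (· % 2 = 1), abrB j := by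
  rw [abrB, sum_attach]

lemma sum_filter_odd_range_two_mul_add_one (f : ℕ → ℕ) (k : ℕ) :
    ∑ j ∈ (range (2 * k + 1)).filter (· % 2 = 1), f j =
      ∑ j ∈ (range (2 * k)).filter (· % 2 = 1), f j := by
  rw [range_add_one, filter_insert, if_neg (by omega)]

lemma sum_filter_odd_range_two_mul_add_two (f : ℕ → ℕ) (k : ℕ) :
    ∑ j ∈ (range (2 * k + 2)).filter (· % 2 = 1), f j =
      ∑ j ∈ (range (2 * k)).filter (· % 2 = 1), f j + f (2 * k + 1) := by
  rw [range_add_one, filter_insert, if_pos (by omega), sum_insert (by simp), add_comm,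
    sum_filter_odd_range_two_mul_add_one]

lemma abrB_two_mul_add_one_and_sum_odd (k : ℕ) :
    abrB (2 * k + 1) = 3 * 4 ^ k ∧
      ∑ j ∈ (range (2 * k + 2)).filter (· % 2 = 1), abrB j + 1 = 4 ^ (k + 1) := by
  induction k with
  | zero =>
    rw [sum_filter_odd_range_two_mul_add_two]
    simp [abrB]
  | succ k ih =>
    obtain ⟨-, hsum⟩ := ih
    have hpow : 2 ^ (2 * k + 4) = 16 * 4 ^ k := by
      rw [pow_add, pow_mul]; norm_num; ring
    have hB : abrB (2 * (k + 1) + 1) = 3 * 4 ^ (k + 1) := by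
      rw [show 2 * (k + 1) + 1 = 2 * k + 1 + 2 by ring, abrB_add_two,
        show 2 * k + 1 + 2 = 2 * (k + 1) + 1 by ring, sum_filter_odd_range_two_mul_add_one,
        show 2 * (k + 1) = 2 * k + 2 by ring, show 2 * k + 1 + 3 = 2 * k + 4 by ring, hpow,
        pow_succ]
      omega
    refine ⟨hB, ?_⟩
    rw [sum_filter_odd_range_two_mul_add_two, hB, show 2 * (k + 1) = 2 * k + 2 by ring,
      pow_succ 4 (k + 1)]
    omega

lemma abrB_two_mul_add_one (k : ℕ) : abrB (2 * k + 1) = 3 * 4 ^ k :=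
  (abrB_two_mul_add_one_and_sum_odd k).1

lemma abrB_two_mul {k : ℕ} (hk : 1 ≤ k) : abrB (2 * k) = 4 ^ k := by
  obtain ⟨k, rfl⟩ := Nat.exists_eq_add_of_le' hk
  have hsum := (abrB_two_mul_add_one_and_sum_odd k).2
  have hpow : 2 ^ (2 * k + 3) = 2 * 4 ^ (k + 1) := by
    rw [pow_add, pow_mul, pow_succ 4]; norm_num; ring
  rw [show 2 * (k + 1) = 2 * k + 2 by ring, abrB_add_two, hpow]
  omega

lemma abrVal_const_true_two_mul (k : ℕ) :
    abrVal (2 * k) (fun _ => true) =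
      ∑ i ∈ range k, ((abrB (2 * i + 1) : ℤ) - abrB (2 * i)) := by
  have hsign : ∀ i < 2 * k, abrEps (2 * k) (fun _ => true) i = if i % 2 = 0 then 1 else 0 := by
    intro i hi
    unfold abrEps
    by_cases h : i % 2 = 0
    · rw [if_pos ⟨h, by omega, rfl, rfl⟩, if_pos h]
    · rw [if_neg fun h' => h h'.1, if_neg h]
  suffices ∀ m ≤ k,
      ∑ i ∈ range (2 * m), (-1) ^ abrEps (2 * k) (fun _ => true) i * (abrB i : ℤ) =
        ∑ i ∈ range m, ((abrB (2 * i + 1) : ℤ) - abrB (2 * i)) by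
    simpa [abrVal] using this k le_rfl
  intro m hm
  induction m with
  | zero => simp
  | succ m ih =>
    rw [show 2 * (m + 1) = 2 * m + 1 + 1 by ring, sum_range_succ, sum_range_succ, sum_range_succ,
      ih (by omega), hsign _ (by omega), hsign _ (by omega), if_pos (by omega), if_neg (by omega)]
    ring

lemma three_mul_abrVal_const_true_two_mul {k : ℕ} (hk : 1 ≤ k) :
    3 * abrVal (2 * k) (fun _ => true) = 2 * 4 ^ k - 5 := by
  rw [abrVal_const_true_two_mul]
  induction k, hk using Nat.le_induction with
  | base => simp [abrB]
  | succ k hk ih =>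
    rw [sum_range_succ, mul_add, ih, abrB_two_mul_add_one, abrB_two_mul hk, pow_succ]
    push_cast
    ring

theorem abr_all_ones_even (k : ℕ) (hk : 1 ≤ k) :
    abrVal (2 * k) (fun _ => true) = (2 * 4 ^ k - 5) / 3 := by
  have h := three_mul_abrVal_const_true_two_mul hk
  omega
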